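/- For likelihood ratios 0 < λ₁ < λ₂ < λ₃ < ∞ with λ₂ the merged LR of (λ₁,π₁) and (λ₃,π₃) (i.e., λ₂ = (λ₁π₁(λ₃+1)+λ₃π₃(λ₁+1))/(π₁(λ₃+1)+π₃(λ₁+1))), the limiting merge losses satisfy the exact split Δ[λ₁,π₁;λ₂,∞] + Δ[λ₃,π₃;λ₂,∞] = Δ[λ₁,π₁;λ₃,π₃], where Δ[λ₁,π₁;λ₂,∞] = π₁(−(λ₁/(λ₁+1))log₂((1+1/λ₁)/(1+1/λ₂)) − (1/(λ₁+1))log₂((λ₁+1)/(λ₂+1))). In particular both limiting losses are at most Δ[λ₁,π₁;λ₃,π₃]. -/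

import Mathlib

/-- Capacity of a symbol pair with likelihood ratio `lam` and probability sum `pi`. -/
noncomputable def CLP (lam pi : ℝ) : ℝ :=
  pi * (1 - lam / (lam + 1) * Real.logb 2 (1 + 1 / lam)
          - 1 / (lam + 1) * Real.logb 2 (1 + lam))

/-- LR of the merge of `[lam₁,pi₁]` and `[lam₃,pi₃]`. -/
noncomputable def lamBar (lam₁ pi₁ lam₃ pi₃ : ℝ) : ℝ :=
  (lam₁ * pi₁ * (lam₃ + 1) + lam₃ * pi₃ * (lam₁ + 1)) /
    (pi₁ * (lam₃ + 1) + pi₃ * (lam₁ + 1))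

/-- Capacity loss of the merge of `[lam₁,pi₁]` and `[lam₃,pi₃]`. -/
noncomputable def deltaLP (lam₁ pi₁ lam₃ pi₃ : ℝ) : ℝ :=
  CLP lam₁ pi₁ + CLP lam₃ pi₃ - CLP (lamBar lam₁ pi₁ lam₃ pi₃) (pi₁ + pi₃)

/-- Limiting merge loss `Δ[lam,pi; mu,∞]` for `0 < lam < ∞`. -/
noncomputable def deltaInf (lam pi mu : ℝ) : ℝ :=
  pi * (-(lam / (lam + 1)) * Real.logb 2 ((1 + 1 / lam) / (1 + 1 / mu))
        - 1 / (lam + 1) * Real.logb 2 ((lam + 1) / (mu + 1)))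

/-!
Write `a = πλ/(λ+1)` and `b = π/(λ+1)` for the two masses of a pair. Then
`Δ[λ,π;μ,∞] = C[λ,π] - C_μ[λ,π]`, where `C_μ[λ,π]` is the capacity formula with the logarithms
taken at `μ` instead of `λ`. For fixed `μ` the cross capacity `C_μ` is linear in `(a, b)`, merging
adds the masses, and `λ₂` is exactly the likelihood ratio of the merged masses; hence
`C_{λ₂}[λ₁,π₁] + C_{λ₂}[λ₃,π₃] = C[λ₂,π₁+π₃]`, which is the split. Each limiting loss is `π` times
a binary Kullback–Leibler divergence, so it is nonnegative and both bounds follow.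
-/

open Real

noncomputable def crossCLP (lam pi mu : ℝ) : ℝ :=
  pi * (1 - lam / (lam + 1) * logb 2 (1 + 1 / mu) - 1 / (lam + 1) * logb 2 (1 + mu))

theorem crossCLP_self (lam pi : ℝ) : crossCLP lam pi lam = CLP lam pi := rfl

theorem crossCLP_eq (lam pi mu : ℝ) (hl : lam + 1 ≠ 0) :
    crossCLP lam pi mu = pi * (1 - logb 2 (1 + 1 / mu))
      + pi / (lam + 1) * (logb 2 (1 + 1 / mu) - logb 2 (1 + mu)) := by
  unfold crossCLP
  field_simp
  ring

section Merge

variable {lam₁ pi₁ lam₃ pi₃ : ℝ}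

theorem lamBar_add_one (hD : pi₁ * (lam₃ + 1) + pi₃ * (lam₁ + 1) ≠ 0) :
    lamBar lam₁ pi₁ lam₃ pi₃ + 1
      = (pi₁ + pi₃) * (lam₁ + 1) * (lam₃ + 1) / (pi₁ * (lam₃ + 1) + pi₃ * (lam₁ + 1)) := by
  unfold lamBar
  field_simp
  ring

theorem add_div_lamBar_add_one (h₁ : lam₁ + 1 ≠ 0) (h₃ : lam₃ + 1 ≠ 0) (hpi : pi₁ + pi₃ ≠ 0)
    (hD : pi₁ * (lam₃ + 1) + pi₃ * (lam₁ + 1) ≠ 0) :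
    (pi₁ + pi₃) / (lamBar lam₁ pi₁ lam₃ pi₃ + 1) = pi₁ / (lam₁ + 1) + pi₃ / (lam₃ + 1) := by
  rw [lamBar_add_one hD]
  field_simp

theorem crossCLP_add_crossCLP (mu : ℝ) (h₁ : lam₁ + 1 ≠ 0) (h₃ : lam₃ + 1 ≠ 0)
    (hpi : pi₁ + pi₃ ≠ 0) (hD : pi₁ * (lam₃ + 1) + pi₃ * (lam₁ + 1) ≠ 0) :
    crossCLP lam₁ pi₁ mu + crossCLP lam₃ pi₃ mu
      = crossCLP (lamBar lam₁ pi₁ lam₃ pi₃) (pi₁ + pi₃) mu := by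
  have hbar : lamBar lam₁ pi₁ lam₃ pi₃ + 1 ≠ 0 := by
    rw [lamBar_add_one hD]
    exact div_ne_zero (mul_ne_zero (mul_ne_zero hpi h₁) h₃) hD
  rw [crossCLP_eq _ _ _ h₁, crossCLP_eq _ _ _ h₃, crossCLP_eq _ _ _ hbar,
    add_div_lamBar_add_one h₁ h₃ hpi hD]
  ring

end Merge

theorem deltaInf_eq_CLP_sub_crossCLP {lam mu : ℝ} (pi : ℝ) (hl : 0 < lam) (hm : 0 < mu) :
    deltaInf lam pi mu = CLP lam pi - crossCLP lam pi mu := by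
  unfold deltaInf CLP crossCLP
  rw [logb_div (by positivity) (by positivity), logb_div (by positivity) (by positivity),
    add_comm 1 lam, add_comm 1 mu]
  ring

theorem mul_log_add_mul_log_nonpos {a b x y : ℝ} (ha : 0 ≤ a) (hb : 0 ≤ b) (hab : a + b = 1)
    (hx : 0 < x) (hy : 0 < y) (hxy : a * x + b * y = 1) :
    a * log x + b * log y ≤ 0 := by
  simpa [hxy] using strictConcaveOn_log_Ioi.concaveOn.2 hx hy ha hb hab

theorem deltaInf_nonneg {lam mu pi : ℝ} (hl : 0 < lam) (hm : 0 < mu) (hpi : 0 ≤ pi) :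
    0 ≤ deltaInf lam pi mu := by
  have hgibbs : lam / (lam + 1) * log ((1 + 1 / lam) / (1 + 1 / mu))
      + 1 / (lam + 1) * log ((lam + 1) / (mu + 1)) ≤ 0 :=
    mul_log_add_mul_log_nonpos (by positivity) (by positivity) (by field_simp)
      (by positivity) (by positivity) (by field_simp)
  have hdiv := div_nonpos_of_nonpos_of_nonneg hgibbs (log_nonneg one_le_two)
  unfold deltaInf
  refine mul_nonneg hpi ?_
  rw [show -(lam / (lam + 1)) * logb 2 ((1 + 1 / lam) / (1 + 1 / mu))
      - 1 / (lam + 1) * logb 2 ((lam + 1) / (mu + 1))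
      = -((lam / (lam + 1) * log ((1 + 1 / lam) / (1 + 1 / mu))
        + 1 / (lam + 1) * log ((lam + 1) / (mu + 1))) / log 2) by unfold logb; ring]
  exact neg_nonneg.2 hdiv

/-- if `lam₂` is the merged LR of `(lam₁,pi₁)` and `(lam₃,pi₃)`,
the limiting losses split the merge loss exactly, and each is at most the
merge loss. -/
theorem deltaInf_split (lam₁ pi₁ lam₂ lam₃ pi₃ : ℝ)
    (h₀ : 0 < lam₁) (h₁₂ : lam₁ < lam₂) (h₂₃ : lam₂ < lam₃)
    (hpi₁ : 0 < pi₁) (hpi₃ : 0 < pi₃)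
    (hbar : lam₂ = lamBar lam₁ pi₁ lam₃ pi₃) :
    deltaInf lam₁ pi₁ lam₂ + deltaInf lam₃ pi₃ lam₂ = deltaLP lam₁ pi₁ lam₃ pi₃ ∧
    deltaInf lam₁ pi₁ lam₂ ≤ deltaLP lam₁ pi₁ lam₃ pi₃ ∧
    deltaInf lam₃ pi₃ lam₂ ≤ deltaLP lam₁ pi₁ lam₃ pi₃ := by
  have h₂ : 0 < lam₂ := h₀.trans h₁₂
  have h₃ : 0 < lam₃ := h₂.trans h₂₃
  have hsplit : deltaInf lam₁ pi₁ lam₂ + deltaInf lam₃ pi₃ lam₂ = deltaLP lam₁ pi₁ lam₃ pi₃ := by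
    have hmerge := crossCLP_add_crossCLP lam₂ (add_pos h₀ one_pos).ne' (add_pos h₃ one_pos).ne'
      (add_pos hpi₁ hpi₃).ne' (by positivity : 0 < pi₁ * (lam₃ + 1) + pi₃ * (lam₁ + 1)).ne'
    rw [← hbar] at hmerge
    rw [deltaInf_eq_CLP_sub_crossCLP pi₁ h₀ h₂, deltaInf_eq_CLP_sub_crossCLP pi₃ h₃ h₂, deltaLP, ← hbar, ← crossCLP_self lam₂, ← hmerge]
    ring
  refine ⟨hsplit, ?_, ?_⟩
  · linarith [deltaInf_nonneg h₃ h₂ hpi₃.le]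
  · linarith [deltaInf_nonneg h₀ h₂ hpi₁.le]
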